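/- arXiv:1403.5539 — 4 statements merged into one kernel-verified Lean document; each statement's English description precedes it below -/
import Mathlib

section
/- Let (Ω, ℱ, P) be a probability space, X : Ω → E and Z, Z' : Ω → F random elements with values in measurable spaces E and F. Assume that X and Z are independent, that Z' is independent of the pair (X, Z), and that Z' has the same distribution as Z. Let f : E × F → ℝ be measurable such that Y = f(X, Z) is square-integrable, and set Y^X = f(X, Z'). Then Var(E[Y | σ(X)]) = Cov(Y, Y^X). -/
open MeasureTheory ProbabilityTheory

/-- Covariance of two real random variables. -/
noncomputable def cov {Ω : Type*} [MeasurableSpace Ω] (Y Y' : Ω → ℝ) (P : Measure Ω) : ℝ :=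
  ∫ ω, (Y ω - ∫ a, Y a ∂P) * (Y' ω - ∫ a, Y' a ∂P) ∂P

/-!
Independence of `X` and `Z` gives `E[Y | X] = g ∘ X` with `g x = E[f (x, Z)]`, and independence of
`Z'` from `(X, Z)` gives `E[Yˣ | X, Z] = g ∘ X` as well. Pulling out the known factors,
`E[Y Yˣ] = E[Y g(X)] = E[g(X)²]`, while `E[Yˣ] = E[Y] = E[g(X)]` because `(X, Z')` and `(X, Z)`
have the same law.
-/

theorem integral_mul_condExp_of_stronglyMeasurable {Ω : Type*} {m m₀ : MeasurableSpace Ω}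
    {μ : Measure Ω} (hm : m ≤ m₀) [SigmaFinite (μ.trim hm)] {A B : Ω → ℝ}
    (hA : StronglyMeasurable[m] A) (hAB : Integrable (A * B) μ) (hB : Integrable B μ) :
    ∫ ω, A ω * μ[B | m] ω ∂μ = ∫ ω, A ω * B ω ∂μ := by
  calc ∫ ω, A ω * μ[B | m] ω ∂μ = ∫ ω, μ[A * B | m] ω ∂μ :=
        integral_congr_ae (condExp_mul_of_stronglyMeasurable_left hA hAB hB).symm
    _ = ∫ ω, A ω * B ω ∂μ := integral_condExp hm

theorem condExp_comp_prodMk_ae_eq_integral_of_indepFun {Ω E F G : Type*} [MeasurableSpace Ω]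
    [MeasurableSpace E] [MeasurableSpace F] [NormedAddCommGroup G] [NormedSpace ℝ G]
    [CompleteSpace G] {P : Measure Ω} [IsFiniteMeasure P] {X : Ω → E} {Z : Ω → F}
    (hX : Measurable X) (hZ : Measurable Z) (hXZ : IndepFun X Z P) {f : E × F → G}
    (hf : StronglyMeasurable f) (hfXZ : Integrable (fun ω => f (X ω, Z ω)) P) :
    P[fun ω => f (X ω, Z ω) | MeasurableSpace.comap X inferInstance] =ᵐ[P]
      fun ω => ∫ z, f (X ω, z) ∂(P.map Z) := by
  have hlaw : P.map (fun ω => (X ω, Z ω)) = (P.map X).prod (P.map Z) :=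
    hXZ.map_prod_eq_prod_map_map hX.aemeasurable hZ.aemeasurable
  have hf_int : Integrable f ((P.map X).prod (P.map Z)) := by
    rwa [← hlaw, integrable_map_measure hf.aestronglyMeasurable (hX.prodMk hZ).aemeasurable]
  have hg : StronglyMeasurable fun x => ∫ z, f (x, z) ∂(P.map Z) := hf.integral_prod_right'
  refine (ae_eq_condExp_of_forall_setIntegral_eq hX.comap_le hfXZ (fun s _ _ => ?_) ?_
    (hg.comp_measurable (comap_measurable X)).aestronglyMeasurable).symm
  · exact ((integrable_map_measure hg.aestronglyMeasurable hX.aemeasurable).mp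
      hf_int.integral_prod_left).integrableOn
  · rintro s ⟨A, hA, rfl⟩ _
    have hpre : X ⁻¹' A = (fun ω => (X ω, Z ω)) ⁻¹' (A ×ˢ Set.univ) := by ext; simp
    rw [Function.comp_def, ← setIntegral_map hA hg.aestronglyMeasurable hX.aemeasurable, hpre,
      ← setIntegral_map (hA.prod MeasurableSet.univ) hf.aestronglyMeasurable
        (hX.prodMk hZ).aemeasurable, hlaw, setIntegral_prod _ hf_int.integrableOn,
      Measure.restrict_univ]

theorem condExp_comp_prodMk_ae_eq_of_indepFun_of_identDistrib {Ω E F : Type*}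
    [MeasurableSpace Ω] [MeasurableSpace E] [MeasurableSpace F] {P : Measure Ω}
    [IsFiniteMeasure P] {X : Ω → E} {Z Z' : Ω → F} (hX : Measurable X) (hZ : Measurable Z)
    (hZ' : Measurable Z') (hXZ : IndepFun X Z P) (hZ'XZ : IndepFun Z' (fun ω => (X ω, Z ω)) P)
    (hZ'Z : IdentDistrib Z' Z P P) {f : E × F → ℝ} (hf : Measurable f)
    (hfXZ : Integrable (fun ω => f (X ω, Z ω)) P)
    (hfXZ' : Integrable (fun ω => f (X ω, Z' ω)) P) :
    P[fun ω => f (X ω, Z' ω) | MeasurableSpace.comap (fun ω => (X ω, Z ω)) inferInstance]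
      =ᵐ[P] P[fun ω => f (X ω, Z ω) | MeasurableSpace.comap X inferInstance] := by
  have hfXZ'_cond := condExp_comp_prodMk_ae_eq_integral_of_indepFun (hX.prodMk hZ) hZ'
    hZ'XZ.symm (f := fun q => f (q.1.1, q.2)) (hf.comp (by fun_prop)).stronglyMeasurable hfXZ'
  rw [hZ'Z.map_eq] at hfXZ'_cond
  exact hfXZ'_cond.trans
    (condExp_comp_prodMk_ae_eq_integral_of_indepFun hX hZ hXZ hf.stronglyMeasurable hfXZ).symm

theorem cov_eq_covariance {Ω : Type*} [MeasurableSpace Ω] (Y Y' : Ω → ℝ) (P : Measure Ω) :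
    cov Y Y' P = covariance Y Y' P :=
  rfl

/-- **Sobol pick-and-freeze lemma.** If `X` and `Z` are independent, `Z'` is independent of the
pair `(X, Z)` and has the same distribution as `Z`, and `Y = f (X, Z)` is square-integrable, then
`Var (E[Y | σ(X)]) = Cov (Y, Yˣ)` where `Yˣ = f (X, Z')`. -/
theorem stmt_0 {Ω E F : Type*} [MeasurableSpace Ω] {P : Measure Ω} [IsProbabilityMeasure P]
    [MeasurableSpace E] [MeasurableSpace F]
    (X : Ω → E) (Z Z' : Ω → F)
    (hX : Measurable X) (hZ : Measurable Z) (hZ' : Measurable Z')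
    (hXZ : IndepFun X Z P)
    (hZ'XZ : IndepFun Z' (fun ω => (X ω, Z ω)) P)
    (hZ'Z : IdentDistrib Z' Z P P)
    (f : E × F → ℝ) (hf : Measurable f)
    (Y : Ω → ℝ) (hY : Y = fun ω => f (X ω, Z ω))
    (YX : Ω → ℝ) (hYX : YX = fun ω => f (X ω, Z' ω))
    (hY2 : MemLp Y 2 P) :
    variance (P[Y | MeasurableSpace.comap X inferInstance]) P = cov Y YX P := by
  set C := P[Y | MeasurableSpace.comap X inferInstance]
  have hYX_law : IdentDistrib YX Y P P := by
    subst hY hYX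
    have hXZ' : IndepFun X Z' P := hZ'XZ.symm.comp measurable_fst measurable_id
    exact ((IdentDistrib.refl hX.aemeasurable).prodMk hZ'Z hXZ' hXZ).comp hf
  have hYX2 : MemLp YX 2 P := hYX_law.memLp_iff.mpr hY2
  have hC2 : MemLp C 2 P := hY2.condExp one_le_two
  have hCC : ∫ ω, C ω * C ω ∂P = ∫ ω, C ω * Y ω ∂P :=
    integral_mul_condExp_of_stronglyMeasurable hX.comap_le stronglyMeasurable_condExp
      (hC2.integrable_mul hY2) (hY2.integrable one_le_two)
  have hYYX : ∫ ω, Y ω * YX ω ∂P = ∫ ω, C ω * Y ω ∂P := by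
    subst hY hYX
    rw [← integral_mul_condExp_of_stronglyMeasurable (hX.prodMk hZ).comap_le
      (A := fun ω => f (X ω, Z ω)) (hf.comp (comap_measurable _)).stronglyMeasurable
      (hY2.integrable_mul hYX2) (hYX2.integrable one_le_two)]
    refine integral_congr_ae ?_
    filter_upwards [condExp_comp_prodMk_ae_eq_of_indepFun_of_identDistrib hX hZ hZ' hXZ hZ'XZ
      hZ'Z hf (hY2.integrable one_le_two) (hYX2.integrable one_le_two)] with ω hω
    rw [hω, mul_comm]
  have hEC : ∫ ω, C ω ∂P = ∫ ω, Y ω ∂P := integral_condExp hX.comap_le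
  rw [cov_eq_covariance, variance_eq_sub hC2, covariance_eq_sub hY2 hYX2, hYX_law.integral_eq]
  simp only [Pi.pow_apply, Pi.mul_apply, sq]
  rw [hCC, hYYX, hEC]
end

section
/- Let (Ω, ℱ, P) be a probability space, X : Ω → E and Z, Z' : Ω → F random elements with X and Z independent, Z' independent of the pair (X, Z), and Z' distributed as Z. Let f : E × F → ℝ be measurable such that Y = f(X, Z) is square-integrable with Var(Y) ≠ 0, and set Y^X = f(X, Z'). Then the Sobol index S^X = Var(E[Y | σ(X)]) / Var(Y) satisfies S^X = Cov(Y, Y^X) / Var(Y). -/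
/-!
Put `g x = E f (x, Z)`. Since `X` and `Z` are independent, `g (X)` is a version of `E[Y | X]`;
since `Z'` is independent of `(X, Z)` with the law of `Z`, it is also a version of
`E[Yˣ | X, Z]`. Conditioning `Y Yˣ` first on `(X, Z)` and then on `X` gives
`E[Y Yˣ] = E[g (X)²]`, and `Yˣ` has the law of `Y`, so
`Cov (Y, Yˣ) = E[g (X)²] - E[g (X)]² = Var E[Y | X]`.
-/

open MeasureTheory ProbabilityTheory

lemma integral_mul_eq_of_condExp_ae_eq {Ω : Type*} {m mΩ : MeasurableSpace Ω} {μ : Measure Ω}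
    [IsFiniteMeasure μ] (hm : m ≤ mΩ) {U V W : Ω → ℝ}
    (hU : StronglyMeasurable[m] U) (hUV : Integrable (U * V) μ) (hV : Integrable V μ)
    (hVW : μ[V | m] =ᵐ[μ] W) :
    ∫ ω, U ω * V ω ∂μ = ∫ ω, U ω * W ω ∂μ :=
  calc ∫ ω, U ω * V ω ∂μ = ∫ ω, μ[U * V | m] ω ∂μ := (integral_condExp hm).symm
    _ = ∫ ω, U ω * W ω ∂μ := by
      refine integral_congr_ae ?_
      filter_upwards [condExp_mul_of_stronglyMeasurable_left hU hUV hV, hVW] with ω h1 h2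
      rw [h1, Pi.mul_apply, h2]

section PickFreeze

variable {Ω E F : Type*} [MeasurableSpace Ω] [MeasurableSpace E] [MeasurableSpace F]

lemma condExp_comap_ae_eq_integral_of_indepFun {G : Type*} [NormedAddCommGroup G]
    [NormedSpace ℝ G] [CompleteSpace G] {P : Measure Ω} [IsProbabilityMeasure P]
    {X : Ω → E} {Z : Ω → F} (hX : Measurable X) (hZ : Measurable Z) (hXZ : IndepFun X Z P)
    {f : E × F → G} (hf : StronglyMeasurable f) (hint : Integrable (fun ω => f (X ω, Z ω)) P) :
    P[fun ω => f (X ω, Z ω) | MeasurableSpace.comap X inferInstance]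
      =ᵐ[P] fun ω => ∫ z, f (X ω, z) ∂(P.map Z) := by
  have hpair : Measurable fun ω => (X ω, Z ω) := hX.prodMk hZ
  have hlaw : P.map (fun ω => (X ω, Z ω)) = (P.map X).prod (P.map Z) :=
    hXZ.map_prod_eq_prod_map_map hX.aemeasurable hZ.aemeasurable
  have hfint : Integrable f ((P.map X).prod (P.map Z)) := by
    rwa [← hlaw, integrable_map_measure hf.aestronglyMeasurable hpair.aemeasurable]
  have hg : StronglyMeasurable fun x => ∫ z, f (x, z) ∂(P.map Z) := hf.integral_prod_right'
  refine (ae_eq_condExp_of_forall_setIntegral_eq hX.comap_le hint (fun s _ _ => ?_) ?_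
    (hg.comp_measurable (Measurable.of_comap_le le_rfl)).aestronglyMeasurable).symm
  · exact ((integrable_map_measure hg.aestronglyMeasurable hX.aemeasurable).1
      hfint.integral_prod_left).integrableOn
  rintro s ⟨A, hA, rfl⟩ _
  calc ∫ ω in X ⁻¹' A, ∫ z, f (X ω, z) ∂(P.map Z) ∂P
      = ∫ x in A, ∫ z, f (x, z) ∂(P.map Z) ∂(P.map X) :=
        (setIntegral_map hA hg.aestronglyMeasurable hX.aemeasurable).symm
    _ = ∫ p in A ×ˢ Set.univ, f p ∂((P.map X).prod (P.map Z)) := by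
        rw [setIntegral_prod f hfint.integrableOn, Measure.restrict_univ]
    _ = ∫ ω in X ⁻¹' A, f (X ω, Z ω) ∂P := by
        rw [← hlaw, setIntegral_map (hA.prod MeasurableSet.univ) hf.aestronglyMeasurable
          hpair.aemeasurable, Set.mk_preimage_prod, Set.preimage_univ, Set.inter_univ]

lemma condExp_comap_prodMk_ae_eq_integral_pickFreeze {P : Measure Ω} [IsProbabilityMeasure P]
    {X : Ω → E} {Z Z' : Ω → F} (hX : Measurable X) (hZ : Measurable Z) (hZ' : Measurable Z')
    (hZ'XZ : IndepFun Z' (fun ω => (X ω, Z ω)) P) (hZ'Z : IdentDistrib Z' Z P P)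
    {f : E × F → ℝ} (hf : Measurable f) (hint : Integrable (fun ω => f (X ω, Z' ω)) P) :
    P[fun ω => f (X ω, Z' ω) | MeasurableSpace.comap (fun ω => (X ω, Z ω)) inferInstance]
      =ᵐ[P] fun ω => ∫ z, f (X ω, z) ∂(P.map Z) := by
  rw [← hZ'Z.map_eq]
  exact condExp_comap_ae_eq_integral_of_indepFun (hX.prodMk hZ) hZ' hZ'XZ.symm
    (f := fun p : (E × F) × F => f (p.1.1, p.2))
    (hf.comp (measurable_fst.fst.prodMk measurable_snd)).stronglyMeasurable hint

lemma variance_condExp_comap_eq_covariance_pickFreeze {P : Measure Ω} [IsProbabilityMeasure P]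
    {X : Ω → E} {Z Z' : Ω → F} (hX : Measurable X) (hZ : Measurable Z) (hZ' : Measurable Z')
    (hXZ : IndepFun X Z P) (hZ'XZ : IndepFun Z' (fun ω => (X ω, Z ω)) P)
    (hZ'Z : IdentDistrib Z' Z P P) {f : E × F → ℝ} (hf : Measurable f)
    (hY2 : MemLp (fun ω => f (X ω, Z ω)) 2 P) :
    Var[P[fun ω => f (X ω, Z ω) | MeasurableSpace.comap X inferInstance]; P]
      = cov[fun ω => f (X ω, Z ω), fun ω => f (X ω, Z' ω); P] := by
  set Y := fun ω => f (X ω, Z ω)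
  set YX := fun ω => f (X ω, Z' ω)
  set g : E → ℝ := fun x => ∫ z, f (x, z) ∂(P.map Z)
  have hpair : Measurable fun ω => (X ω, Z ω) := hX.prodMk hZ
  have hident : IdentDistrib YX Y P P :=
    ((IdentDistrib.refl hX.aemeasurable).prodMk hZ'Z
      (hZ'XZ.comp measurable_id measurable_fst).symm hXZ).comp hf
  have hYX2 : MemLp YX 2 P := hident.symm.memLp_snd hY2
  have hcondX : P[Y | MeasurableSpace.comap X inferInstance] =ᵐ[P] fun ω => g (X ω) :=
    condExp_comap_ae_eq_integral_of_indepFun hX hZ hXZ hf.stronglyMeasurable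
      (hY2.integrable one_le_two)
  have hcondXZ : P[YX | MeasurableSpace.comap (fun ω => (X ω, Z ω)) inferInstance]
      =ᵐ[P] fun ω => g (X ω) :=
    condExp_comap_prodMk_ae_eq_integral_pickFreeze hX hZ hZ' hZ'XZ hZ'Z hf
      (hYX2.integrable one_le_two)
  have hg2 : MemLp (fun ω => g (X ω)) 2 P := (hY2.condExp one_le_two).ae_eq hcondX
  have hgX : StronglyMeasurable[MeasurableSpace.comap X inferInstance] fun ω => g (X ω) :=
    (hf.stronglyMeasurable.integral_prod_right').comp_measurable (Measurable.of_comap_le le_rfl)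
  have hY : StronglyMeasurable[MeasurableSpace.comap (fun ω => (X ω, Z ω)) inferInstance] Y :=
    hf.stronglyMeasurable.comp_measurable (Measurable.of_comap_le le_rfl)
  have hmean : ∫ ω, Y ω ∂P = ∫ ω, g (X ω) ∂P := by
    rw [← integral_condExp hX.comap_le]
    exact integral_congr_ae hcondX
  have hmoment : ∫ ω, Y ω * YX ω ∂P = ∫ ω, g (X ω) * g (X ω) ∂P :=
    calc ∫ ω, Y ω * YX ω ∂P = ∫ ω, Y ω * g (X ω) ∂P :=
          integral_mul_eq_of_condExp_ae_eq hpair.comap_le hY (hY2.integrable_mul hYX2)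
            (hYX2.integrable one_le_two) hcondXZ
      _ = ∫ ω, g (X ω) * Y ω ∂P := by simp_rw [mul_comm]
      _ = ∫ ω, g (X ω) * g (X ω) ∂P :=
          integral_mul_eq_of_condExp_ae_eq hX.comap_le hgX (hg2.integrable_mul hY2)
            (hY2.integrable one_le_two) hcondX
  rw [variance_congr hcondX, variance_eq_sub hg2, covariance_eq_sub hY2 hYX2,
    hident.integral_eq, hmean]
  simp only [Pi.pow_apply, Pi.mul_apply, pow_two, hmoment]

end PickFreeze

theorem stmt_1_general {Ω E F : Type*} [MeasurableSpace Ω] {P : Measure Ω} [IsProbabilityMeasure P]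
    [MeasurableSpace E] [MeasurableSpace F]
    (X : Ω → E) (Z Z' : Ω → F)
    (hX : Measurable X) (hZ : Measurable Z) (hZ' : Measurable Z')
    (hXZ : IndepFun X Z P)
    (hZ'XZ : IndepFun Z' (fun ω => (X ω, Z ω)) P)
    (hZ'Z : IdentDistrib Z' Z P P)
    (f : E × F → ℝ) (hf : Measurable f)
    (Y : Ω → ℝ) (hY : Y = fun ω => f (X ω, Z ω))
    (YX : Ω → ℝ) (hYX : YX = fun ω => f (X ω, Z' ω))
    (hY2 : MemLp Y 2 P)
    (SX : ℝ) (hSX : SX = variance (P[Y | MeasurableSpace.comap X inferInstance]) P / variance Y P) :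
    SX = cov Y YX P / variance Y P := by
  subst hY hYX hSX
  rw [variance_condExp_comap_eq_covariance_pickFreeze hX hZ hZ' hXZ hZ'XZ hZ'Z hf hY2]
  rfl

/-- If `X` and `Z` are independent, `Z'` is independent of the pair `(X, Z)` and distributed as
`Z`, and `Y = f (X, Z)` is square-integrable with `Var Y ≠ 0`, then the Sobol index
`Sˣ = Var (E[Y | σ(X)]) / Var Y` satisfies `Sˣ = Cov (Y, Yˣ) / Var Y` with `Yˣ = f (X, Z')`. -/
theorem stmt_1 {Ω E F : Type*} [MeasurableSpace Ω] {P : Measure Ω} [IsProbabilityMeasure P]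
    [MeasurableSpace E] [MeasurableSpace F]
    (X : Ω → E) (Z Z' : Ω → F)
    (hX : Measurable X) (hZ : Measurable Z) (hZ' : Measurable Z')
    (hXZ : IndepFun X Z P)
    (hZ'XZ : IndepFun Z' (fun ω => (X ω, Z ω)) P)
    (hZ'Z : IdentDistrib Z' Z P P)
    (f : E × F → ℝ) (hf : Measurable f)
    (Y : Ω → ℝ) (hY : Y = fun ω => f (X ω, Z ω))
    (YX : Ω → ℝ) (hYX : YX = fun ω => f (X ω, Z' ω))
    (hY2 : MemLp Y 2 P) (hVar : variance Y P ≠ 0)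
    (SX : ℝ) (hSX : SX = variance (P[Y | MeasurableSpace.comap X inferInstance]) P / variance Y P) :
    SX = cov Y YX P / variance Y P :=
  stmt_1_general X Z Z' hX hZ hZ' hXZ hZ'XZ hZ'Z f hf Y hY YX hYX hY2 SX hSX
end

section
/- Let X : Ω → E and X' : Ω' → E be random elements on (possibly different) probability spaces, and let Y : Ω → ℝ and Y' : Ω' → ℝ be square-integrable random variables such that the joint law of (Y, X) on ℝ × E equals the joint law of (Y', X'). Then Var(E[Y | σ(X)]) = Var(E[Y' | σ(X')]). -/
/-!
`E[Y | σ(X)]` is almost surely `g ∘ X`, where `g x = ∫ y ∂κ x` is the mean of the conditional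
distribution `κ` of `Y` given `X`. The kernel `κ` is a function of the joint law of `(X, Y)` only,
so `(Y, X)` and `(Y', X')` share the same `g`, and `g ∘ X`, `g ∘ X'` have the same law because
`X` and `X'` do. Hence the two conditional expectations are identically distributed.
-/

open MeasureTheory ProbabilityTheory

namespace ProbabilityTheory.IdentDistrib

variable {Ω Ω' E F : Type*} [MeasurableSpace Ω] [MeasurableSpace Ω'] [MeasurableSpace E]
  [MeasurableSpace F] [StandardBorelSpace F] [Nonempty F]
  {P : Measure Ω} {P' : Measure Ω'} [IsFiniteMeasure P] [IsFiniteMeasure P']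
  {X : Ω → E} {X' : Ω' → E} {Y : Ω → F} {Y' : Ω' → F}

theorem condDistrib_eq
    (h : IdentDistrib (fun ω => (Y ω, X ω)) (fun ω => (Y' ω, X' ω)) P P') :
    condDistrib Y X P = condDistrib Y' X' P' := by
  rw [condDistrib, condDistrib]
  congr 1
  exact (h.comp measurable_swap).map_eq

variable [NormedAddCommGroup F] [NormedSpace ℝ F] [CompleteSpace F] [BorelSpace F]
  [SecondCountableTopology F]

theorem condExp_comap (hX : Measurable X) (hX' : Measurable X')
    (h : IdentDistrib (fun ω => (Y ω, X ω)) (fun ω => (Y' ω, X' ω)) P P') :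
    IdentDistrib (P[Y | MeasurableSpace.comap X inferInstance])
      (P'[Y' | MeasurableSpace.comap X' inferInstance]) P P' := by
  by_cases hY : Integrable Y P
  · have hY' : Integrable Y' P' := (h.comp measurable_fst).integrable_iff.mp hY
    set g : E → F := fun x => ∫ y, y ∂condDistrib Y X P x
    have hg : StronglyMeasurable g :=
      (measurable_snd (α := E) (β := F)).stronglyMeasurable.integral_condDistrib
    have hcond : P[Y | MeasurableSpace.comap X inferInstance] =ᵐ[P] g ∘ X :=
      condExp_ae_eq_integral_condDistrib' hX hY
    have hcond' : P'[Y' | MeasurableSpace.comap X' inferInstance] =ᵐ[P'] g ∘ X' := by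
      have := condExp_ae_eq_integral_condDistrib' hX' hY'
      rwa [← h.condDistrib_eq] at this
    have hgX : IdentDistrib (g ∘ X) (g ∘ X') P P' := (h.comp measurable_snd).comp hg.measurable
    have hl : IdentDistrib (P[Y | MeasurableSpace.comap X inferInstance]) (g ∘ X) P P :=
      .of_ae_eq (stronglyMeasurable_condExp.mono hX.comap_le).aemeasurable hcond
    have hr : IdentDistrib (P'[Y' | MeasurableSpace.comap X' inferInstance]) (g ∘ X') P' P' :=
      .of_ae_eq (stronglyMeasurable_condExp.mono hX'.comap_le).aemeasurable hcond'
    exact (hl.trans hgX).trans hr.symm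
  -- Both conditional expectations are then Mathlib's junk value `0`.
  · have hY' : ¬Integrable Y' P' := (h.comp measurable_fst).integrable_iff.not.mp hY
    rw [condExp_of_not_integrable hY, condExp_of_not_integrable hY']
    exact h.comp (measurable_const (a := (0 : F)))

end ProbabilityTheory.IdentDistrib

theorem stmt_7_general {Ω Ω' E : Type*} [MeasurableSpace Ω] [MeasurableSpace Ω'] [MeasurableSpace E]
    {P : Measure Ω} {P' : Measure Ω'} [IsProbabilityMeasure P] [IsProbabilityMeasure P']
    (X : Ω → E) (X' : Ω' → E) (Y : Ω → ℝ) (Y' : Ω' → ℝ)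
    (hX : Measurable X) (hX' : Measurable X')
    (h : IdentDistrib (fun ω => (Y ω, X ω)) (fun ω => (Y' ω, X' ω)) P P') :
    variance (P[Y | MeasurableSpace.comap X inferInstance]) P
      = variance (P'[Y' | MeasurableSpace.comap X' inferInstance]) P' :=
  (h.condExp_comap hX hX').variance_eq

/-- If `(Y, X)` on `(Ω, P)` and `(Y', X')` on `(Ω', P')` have the same joint law, with `Y, Y'`
square-integrable, then `Var (E[Y | σ(X)]) = Var (E[Y' | σ(X')])`. -/
theorem stmt_7 {Ω Ω' E : Type*} [MeasurableSpace Ω] [MeasurableSpace Ω'] [MeasurableSpace E]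
    {P : Measure Ω} {P' : Measure Ω'} [IsProbabilityMeasure P] [IsProbabilityMeasure P']
    (X : Ω → E) (X' : Ω' → E) (Y : Ω → ℝ) (Y' : Ω' → ℝ)
    (hX : Measurable X) (hX' : Measurable X')
    (hY2 : MemLp Y 2 P) (hY'2 : MemLp Y' 2 P')
    (h : IdentDistrib (fun ω => (Y ω, X ω)) (fun ω => (Y' ω, X' ω)) P P') :
    variance (P[Y | MeasurableSpace.comap X inferInstance]) P
      = variance (P'[Y' | MeasurableSpace.comap X' inferInstance]) P' :=
  stmt_7_general X X' Y Y' hX hX' h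
end

section
/- Let (X_t, Y_t)_{t ∈ ℕ} be a real-valued process with each Y_t square-integrable, and suppose the system is jointly stationary in the sense that for every t ∈ ℕ, the joint law of (Y_{t+1}, (X_1, X_2, …, X_{t+1})) equals the joint law of (Y_t, (X_0, X_1, …, X_t)). Define V_t = Var(E[Y_t | σ(X_0, …, X_t)]). Then the sequence (V_t) is nondecreasing, bounded above by Var(Y_0), and converges to sup_K V_K as t → ∞. Consequently, if Var(Y_0) ≠ 0, the projection-on-the-past sensitivity index S^X_t = V_t / Var(Y_t) converges to S^X_∞ = sup_K S^X_K. -/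
open MeasureTheory ProbabilityTheory Filter

/-!
Conditioning on a larger σ-algebra can only increase the explained variance `Var[μ[Y | m]]`
(tower property plus the law of total variance), and `Var[μ[Y | σ(Z)]]` depends only on the joint
law of `(Y, Z)`, since `μ[Y | σ(Z)] = g ∘ Z` with `g` the mean of the regular conditional
distribution of `Y` given `Z`. By stationarity `V t` is the explained variance of `Y (t + 1)` given
`X 1, …, X (t + 1)`, which is at most `V (t + 1)`. So `V` is nondecreasing and bounded by
`Var[Y t] = Var[Y 0]`, hence converges to its supremum, and so does `V t / Var[Y 0]`.
-/

section VarianceCondExp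

variable {Ω : Type*} {m m₁ m₂ m₀ : MeasurableSpace Ω} {μ : Measure Ω} [IsProbabilityMeasure μ]
  {X : Ω → ℝ}

lemma variance_condExp_le (hm : m ≤ m₀) (hX : MemLp X 2 μ) : Var[μ[X | m]; μ] ≤ Var[X; μ] := by
  have hcondVar : 0 ≤ μ[Var[X; μ | m]] :=
    integral_nonneg_of_ae (condExp_nonneg (.of_forall fun ω => sq_nonneg _))
  linarith [integral_condVar_add_variance_condExp hm hX]

lemma variance_condExp_mono (h₁₂ : m₁ ≤ m₂) (hm₂ : m₂ ≤ m₀) (hX : MemLp X 2 μ) :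
    Var[μ[X | m₁]; μ] ≤ Var[μ[X | m₂]; μ] :=
  calc Var[μ[X | m₁]; μ] = Var[μ[μ[X | m₂] | m₁]; μ] :=
        variance_congr (condExp_condExp_of_le h₁₂ hm₂).symm
    _ ≤ Var[μ[X | m₂]; μ] := variance_condExp_le (h₁₂.trans hm₂) (hX.condExp one_le_two)

end VarianceCondExp

lemma ProbabilityTheory.IdentDistrib.variance_condExp_comap_eq {Ω Ω' β : Type*}
    {mΩ : MeasurableSpace Ω} {mΩ' : MeasurableSpace Ω'} {mβ : MeasurableSpace β}
    {μ : Measure Ω} {μ' : Measure Ω'} [IsProbabilityMeasure μ] [IsProbabilityMeasure μ']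
    {Y : Ω → ℝ} {Y' : Ω' → ℝ} {Z : Ω → β} {Z' : Ω' → β}
    (hid : IdentDistrib (fun ω => (Y ω, Z ω)) (fun ω => (Y' ω, Z' ω)) μ μ')
    (hY : Integrable Y μ) (hZ : Measurable Z) (hZ' : Measurable Z') :
    Var[μ[Y | mβ.comap Z]; μ] = Var[μ'[Y' | mβ.comap Z']; μ'] := by
  have hY' : Integrable Y' μ' := (hid.comp measurable_fst).integrable_iff.mp hY
  have hkernel : condDistrib Y Z μ = condDistrib Y' Z' μ' := by
    have hlaw : μ.map (fun ω => (Z ω, Y ω)) = μ'.map (fun ω => (Z' ω, Y' ω)) :=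
      (hid.comp measurable_swap).map_eq
    simp_rw [condDistrib_def, hlaw]
  let g : β → ℝ := fun z => ∫ y, y ∂condDistrib Y Z μ z
  have hg : Measurable g :=
    (measurable_snd.stronglyMeasurable.integral_condDistrib (Y := Y) (X := Z) (μ := μ)).measurable
  calc Var[μ[Y | mβ.comap Z]; μ] = Var[g ∘ Z; μ] :=
        variance_congr (condExp_ae_eq_integral_condDistrib' hZ hY)
    _ = Var[g ∘ Z'; μ'] := ((hid.comp measurable_snd).comp hg).variance_eq
    _ = Var[μ'[Y' | mβ.comap Z']; μ'] := by
        rw [variance_congr (condExp_ae_eq_integral_condDistrib' hZ' hY'), ← hkernel]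
        rfl

/-- **Temporal convergence of the Sobol index for a stationary system.** If for every `t` the
joint law of `(Y_{t+1}, (X_1, …, X_{t+1}))` equals that of `(Y_t, (X_0, …, X_t))`, with each `Y_t`
square-integrable, then `V_t = Var (E[Y_t | σ(X_0, …, X_t)])` is nondecreasing, bounded above by
`Var Y_0`, and converges to `⨆ K, V_K`; consequently, if `Var Y_0 ≠ 0`, the
projection-on-the-past sensitivity index `Sˣ_t = V_t / Var Y_t` converges to
`Sˣ_∞ = ⨆ K, Sˣ_K`. -/
theorem stmt_8 {Ω : Type*} [MeasurableSpace Ω] {P : Measure Ω} [IsProbabilityMeasure P]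
    (X Y : ℕ → Ω → ℝ)
    (hX : ∀ t, Measurable (X t))
    (hY2 : ∀ t, MemLp (Y t) 2 P)
    (hstat : ∀ t : ℕ,
      IdentDistrib (fun ω => (Y (t + 1) ω, fun i : Fin (t + 1) => X (i.val + 1) ω))
        (fun ω => (Y t ω, fun i : Fin (t + 1) => X i ω)) P P)
    (V : ℕ → ℝ)
    (hV : ∀ t, V t =
      variance
        (P[Y t | MeasurableSpace.comap (fun ω => fun i : Fin (t + 1) => X i.val ω) inferInstance]) P) :
    Monotone V ∧ (∀ t, V t ≤ variance (Y 0) P) ∧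
      Tendsto V atTop (nhds (⨆ K, V K)) ∧
      (variance (Y 0) P ≠ 0 →
        Tendsto (fun t => V t / variance (Y t) P) atTop
          (nhds (⨆ K, V K / variance (Y K) P))) := by
  have hpast : ∀ t, Measurable fun ω => fun i : Fin (t + 1) => X i.val ω :=
    fun t => measurable_pi_lambda _ fun i => hX i
  have hshifted : ∀ t, Measurable fun ω => fun i : Fin (t + 1) => X (i.val + 1) ω :=
    fun t => measurable_pi_lambda _ fun i => hX (i + 1)
  have hVarY : ∀ t, Var[Y t; P] = Var[Y 0; P] := by
    intro t
    induction t with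
    | zero => rfl
    | succ t ih => exact ((hstat t).comp measurable_fst).variance_eq.trans ih
  have hmono : Monotone V := by
    refine monotone_nat_of_le_succ fun t => ?_
    -- by stationarity, `V t` is also the explained variance of `Y (t + 1)` given `X 1, …, X (t + 1)`
    have hVshift : V t = Var[P[Y (t + 1) | MeasurableSpace.comap
        (fun ω => fun i : Fin (t + 1) => X (i.val + 1) ω) inferInstance]; P] := by
      rw [hV, (hstat t).variance_condExp_comap_eq ((hY2 _).integrable one_le_two)
        (hshifted t) (hpast t)]
    have hle : MeasurableSpace.comap (fun ω => fun i : Fin (t + 1) => X (i.val + 1) ω) inferInstance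
        ≤ MeasurableSpace.comap (fun ω => fun i : Fin (t + 2) => X i.val ω) inferInstance :=
      measurable_iff_comap_le.1 <|
        (measurable_pi_lambda (fun (v : Fin (t + 2) → ℝ) (i : Fin (t + 1)) => v i.succ)
          fun i => measurable_pi_apply _).comp (comap_measurable _)
    rw [hVshift, hV]
    exact variance_condExp_mono hle (hpast (t + 1)).comap_le (hY2 (t + 1))
  have hbound : ∀ t, V t ≤ Var[Y 0; P] := fun t => by
    rw [hV, ← hVarY t]
    exact variance_condExp_le (hpast t).comap_le (hY2 t)
  have hbdd : BddAbove (Set.range V) := ⟨_, Set.forall_mem_range.2 hbound⟩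
  refine ⟨hmono, hbound, tendsto_atTop_ciSup hmono hbdd, fun _ => ?_⟩
  have hVarY_nonneg := variance_nonneg (Y 0) P
  simp_rw [hVarY]
  exact tendsto_atTop_ciSup (hmono.div_const hVarY_nonneg) ⟨_, Set.forall_mem_range.2 fun t =>
    div_le_div_of_nonneg_right (hbound t) hVarY_nonneg⟩
end
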